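/- arXiv:2502.19830 — 2 statements merged into one kernel-verified Lean document; each statement's English description precedes it below -/
import Mathlib

section
/- Let N be a positive integer and let p̂₁, p̂₂ be real numbers with 0 < p̂₂ ≤ p̂₁, p̂₁ + p̂₂ ≤ 1, and p̂₁ − p̂₂ ≥ 1.16/√N. Then (p̂₁ − p̂₂) / √((p̂₁(1−p̂₁) + p̂₂(1−p̂₂))/N) ≥ 1.64. -/
/-- The paper's full z-test conclusion: whenever the First–Second Distance
`p̂₁ − p̂₂` exceeds `τ = 1.16/√N`, the observed z-statistic is at least `1.64`. -/
theorem z_test_conclusion (N : ℕ) (hN : 0 < N)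
    (p1 p2 : ℝ) (h2 : 0 < p2) (h12 : p2 ≤ p1) (hsum : p1 + p2 ≤ 1)
    (hfsd : p1 - p2 ≥ 1.16 / Real.sqrt N) :
    (p1 - p2) / Real.sqrt ((p1 * (1 - p1) + p2 * (1 - p2)) / N) ≥ 1.64 := by
  have hNpos : (0:ℝ) < N := Nat.cast_pos.mpr hN
  have hsN : 0 < Real.sqrt N := Real.sqrt_pos.mpr hNpos
  set V : ℝ := p1 * (1 - p1) + p2 * (1 - p2) with hV
  have hp1lt : p1 < 1 := by linarith
  have hVpos : 0 < V := by nlinarith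
  have hVle : V ≤ 1/2 := by nlinarith [sq_nonneg (p1 - 1/2), sq_nonneg (p2 - 1/2)]
  have hden : 0 < Real.sqrt (V / N) := Real.sqrt_pos.mpr (div_pos hVpos hNpos)
  rw [ge_iff_le, le_div_iff₀ hden]
  have h1 : Real.sqrt (V / N) ≤ Real.sqrt ((1/2) / N) :=
    Real.sqrt_le_sqrt (by gcongr)
  have h2' : Real.sqrt ((1/2 : ℝ) / N) = Real.sqrt (1/2) / Real.sqrt N :=
    Real.sqrt_div (by norm_num) N
  have h3 : Real.sqrt (1/2 : ℝ) ≤ 29/41 := by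
    rw [show (29:ℝ)/41 = Real.sqrt ((29/41)^2) by rw [Real.sqrt_sq (by norm_num)]]
    exact Real.sqrt_le_sqrt (by norm_num)
  have h4 : Real.sqrt (V / N) ≤ (29/41) / Real.sqrt N := by
    rw [h2'] at h1
    calc Real.sqrt (V / N) ≤ Real.sqrt (1/2) / Real.sqrt N := h1
      _ ≤ (29/41) / Real.sqrt N := by gcongr
  calc 1.64 * Real.sqrt (V / N) ≤ 1.64 * ((29/41) / Real.sqrt N) := by
        have : (0:ℝ) ≤ 1.64 := by norm_num
        exact mul_le_mul_of_nonneg_left h4 this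
    _ = 1.16 / Real.sqrt N := by field_simp; ring
    _ ≤ p1 - p2 := hfsd
end

section
/- Let D be a finite nonempty dataset. For each j ∈ D, let Y_j be a finite nonempty type of answers with ground truth gt_j ∈ Y_j, let μ_j be a probability measure on Y_j with strict mode y*_j (i.e., μ_j({y}) < μ_j({y*_j}) for all y ≠ y*_j), and let (Y_{j,i})_{i∈ℕ} be an i.i.d. sequence with distribution μ_j, all questions' sample sequences being mutually independent. For each n, let a_j(n) denote a majority-vote answer of question j from its first n samples (any y maximizing Σ_{i<n} 𝟙[Y_{j,i} = y]), and define Acc_D^n = (1/|D|) · Σ_{j∈D} 𝟙[a_j(n) = gt_j]. Then almost surely Acc_D^n converges, and its limit equals (1/|D|) · Σ_{j∈D} 𝟙[y*_j = gt_j]. -/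
/-!
By the strong law of large numbers applied to the indicators `𝟙[Y_{j,i} = y]`, almost surely the
vote share of every answer `y` of every question `j` converges to `μ_j {y}`. Since `y*_j` is a
strict mode and each `Y_j` is finite, eventually `y*_j` collects strictly more votes than any other
answer, so every majority vote equals `y*_j`, and the accuracy is eventually constant.
-/

open MeasureTheory ProbabilityTheory Filter Finset
open scoped Classical Topology

def voteCount {α : Type*} [DecidableEq α] (x : ℕ → α) (n : ℕ) (y : α) : ℕ :=
  ∑ i ∈ range n, if x i = y then 1 else 0

lemma eventually_lt_of_tendsto_div {u v : ℕ → ℝ} {p q : ℝ}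
    (hu : Tendsto (fun n => u n / n) atTop (𝓝 p))
    (hv : Tendsto (fun n => v n / n) atTop (𝓝 q)) (hpq : p < q) :
    ∀ᶠ n in atTop, u n < v n := by
  filter_upwards [hu.eventually_lt hv hpq, eventually_gt_atTop 0] with n hn hn_pos
  exact (div_lt_div_iff_of_pos_right (Nat.cast_pos.2 hn_pos)).1 hn

lemma eventually_eq_of_forall_voteCount_le {α : Type*} [DecidableEq α] [Finite α]
    {x : ℕ → α} {p : α → ℝ} {y₀ : α}
    (hfreq : ∀ y, Tendsto (fun n => (voteCount x n y : ℝ) / n) atTop (𝓝 (p y)))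
    (hmode : ∀ y, y ≠ y₀ → p y < p y₀) :
    ∀ᶠ n in atTop, ∀ y, (∀ z, voteCount x n z ≤ voteCount x n y) → y = y₀ := by
  have hlt : ∀ᶠ n in atTop, ∀ y, y ≠ y₀ → voteCount x n y < voteCount x n y₀ := by
    refine eventually_all.2 fun y => ?_
    by_cases hy : y = y₀
    · exact Eventually.of_forall fun _ h => absurd hy h
    · filter_upwards [eventually_lt_of_tendsto_div (hfreq y) (hfreq y₀) (hmode y hy)]
        with n hn
      exact fun _ => by exact_mod_cast hn
  filter_upwards [hlt] with n hn y hmax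
  by_contra hy
  exact (hn y hy).not_ge (hmax y₀)

lemma ae_tendsto_voteCount_div {Ω α : Type*} [MeasurableSpace Ω] [MeasurableSpace α]
    [MeasurableSingletonClass α] [DecidableEq α] {P : Measure Ω} [IsFiniteMeasure P]
    {ν : Measure α} {X : ℕ → Ω → α} (hX : ∀ i, Measurable (X i))
    (hindep : Pairwise fun i k => IndepFun (X i) (X k) P) (hident : ∀ i, P.map (X i) = ν)
    (y : α) :
    ∀ᵐ ω ∂P,
      Tendsto (fun n => (voteCount (X · ω) n y : ℝ) / n) atTop (𝓝 (ν.real {y})) := by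
  set g : α → ℝ := ({y} : Set α).indicator 1
  have hg : Measurable g := measurable_one.indicator (measurableSet_singleton y)
  have hcount : ∀ n ω, (voteCount (X · ω) n y : ℝ) = ∑ i ∈ range n, g (X i ω) := by
    intro n ω
    simp only [voteCount, g, Nat.cast_sum, Nat.cast_ite, Nat.cast_one, Nat.cast_zero,
      Set.indicator_apply, Set.mem_singleton_iff, Pi.one_apply]
  have hmean : ∫ ω, g (X 0 ω) ∂P = ν.real {y} := by
    rw [← integral_map (hX 0).aemeasurable hg.aestronglyMeasurable, hident,
      integral_indicator_one (measurableSet_singleton y)]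
  have hint : Integrable (fun ω => g (X 0 ω)) P :=
    (integrable_const (1 : ℝ)).mono' (hg.comp (hX 0)).aestronglyMeasurable
      (Eventually.of_forall fun ω => by
        simp only [g, Set.indicator_apply]; split_ifs <;> simp)
  have hlaw := strong_law_ae_real (fun i ω => g (X i ω)) hint
    (fun i k hik => (hindep hik).comp hg hg) fun i =>
      IdentDistrib.comp ⟨(hX i).aemeasurable, (hX 0).aemeasurable, by rw [hident, hident]⟩ hg
  filter_upwards [hlaw] with ω hω
  simpa only [hcount, ← hmean] using hω

theorem self_consistency_accuracy_tendsto_true_accuracy_general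
    (D : Type*) [Fintype D]
    (Y : D → Type*) [∀ j, Fintype (Y j)]
    [∀ j, MeasurableSpace (Y j)] [∀ j, MeasurableSingletonClass (Y j)]
    (gt : (j : D) → Y j)
    (μ : (j : D) → Measure (Y j)) [∀ j, IsProbabilityMeasure (μ j)]
    (ystar : (j : D) → Y j)
    (hmode : ∀ j, ∀ y : Y j, y ≠ ystar j → μ j {y} < μ j {ystar j})
    (Ω : Type*) [MeasureSpace Ω] [IsProbabilityMeasure (ℙ : Measure Ω)]
    (X : (j : D) → ℕ → Ω → Y j)
    (hmeas : ∀ j i, Measurable (X j i))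
    -- all samples, across all questions and sample indices, are mutually independent
    (hindep : iIndepFun (β := fun p : D × ℕ => Y p.1)
      (fun p => X p.1 p.2) ℙ)
    -- each question's samples are identically distributed with law `μ j`
    (hdist : ∀ j i, Measure.map (X j i) ℙ = μ j)
    -- `a j n ω` is a majority-vote answer: it maximizes the vote count
    (a : (j : D) → ℕ → Ω → Y j)
    (ha : ∀ j n (ω : Ω) (y : Y j),
      (∑ i ∈ Finset.range n, (if X j i ω = y then (1 : ℕ) else 0))
        ≤ ∑ i ∈ Finset.range n, (if X j i ω = a j n ω then (1 : ℕ) else 0)) :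
    ∀ᵐ ω ∂(ℙ : Measure Ω),
      Tendsto (fun n : ℕ =>
          ((1 : ℝ) / Fintype.card D) * ∑ j : D, (if a j n ω = gt j then (1 : ℝ) else 0))
        atTop
        (nhds (((1 : ℝ) / Fintype.card D) * ∑ j : D, (if ystar j = gt j then (1 : ℝ) else 0))) := by
  have hfreq : ∀ᵐ ω, ∀ j y, Tendsto (fun n => (voteCount (X j · ω) n y : ℝ) / n) atTop
      (𝓝 ((μ j).real {y})) := by
    simp only [ae_all_iff]
    exact fun j => ae_tendsto_voteCount_div (hmeas j)
      (fun i k hik => hindep.indepFun (i := (j, i)) (j := (j, k)) (by simpa using hik))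
      (hdist j)
  have hmode_real : ∀ j, ∀ y, y ≠ ystar j → (μ j).real {y} < (μ j).real {ystar j} :=
    fun j y hy => (ENNReal.toReal_lt_toReal (measure_ne_top _ _) (measure_ne_top _ _)).2
      (hmode j y hy)
  filter_upwards [hfreq] with ω hω
  have hmajority : ∀ᶠ n in atTop, ∀ j, a j n ω = ystar j := eventually_all.2 fun j =>
    (eventually_eq_of_forall_voteCount_le (hω j) (hmode_real j)).mono fun n hn => hn _ (ha j n ω)
  refine tendsto_const_nhds.congr' ?_
  filter_upwards [hmajority] with n hn
  simp only [hn]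

/-- Insight 1 of the paper: almost surely, the self-consistency accuracy over a
finite dataset converges, and its limit is the accuracy of the true answer
distributions, i.e. the fraction of questions whose true top-1 answer (strict
mode) equals the ground truth. -/
theorem self_consistency_accuracy_tendsto_true_accuracy
    (D : Type*) [Fintype D] [Nonempty D]
    (Y : D → Type*) [∀ j, Fintype (Y j)] [∀ j, Nonempty (Y j)]
    [∀ j, MeasurableSpace (Y j)] [∀ j, MeasurableSingletonClass (Y j)]
    (gt : (j : D) → Y j)
    (μ : (j : D) → Measure (Y j)) [∀ j, IsProbabilityMeasure (μ j)]
    (ystar : (j : D) → Y j)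
    (hmode : ∀ j, ∀ y : Y j, y ≠ ystar j → μ j {y} < μ j {ystar j})
    (Ω : Type*) [MeasureSpace Ω] [IsProbabilityMeasure (ℙ : Measure Ω)]
    (X : (j : D) → ℕ → Ω → Y j)
    (hmeas : ∀ j i, Measurable (X j i))
    -- all samples, across all questions and sample indices, are mutually independent
    (hindep : iIndepFun (β := fun p : D × ℕ => Y p.1)
      (fun p => X p.1 p.2) ℙ)
    -- each question's samples are identically distributed with law `μ j`
    (hdist : ∀ j i, Measure.map (X j i) ℙ = μ j)
    -- `a j n ω` is a majority-vote answer: it maximizes the vote count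
    (a : (j : D) → ℕ → Ω → Y j)
    (ha : ∀ j n (ω : Ω) (y : Y j),
      (∑ i ∈ Finset.range n, (if X j i ω = y then (1 : ℕ) else 0))
        ≤ ∑ i ∈ Finset.range n, (if X j i ω = a j n ω then (1 : ℕ) else 0)) :
    ∀ᵐ ω ∂(ℙ : Measure Ω),
      Tendsto (fun n : ℕ =>
          ((1 : ℝ) / Fintype.card D) * ∑ j : D, (if a j n ω = gt j then (1 : ℝ) else 0))
        atTop
        (nhds (((1 : ℝ) / Fintype.card D) * ∑ j : D, (if ystar j = gt j then (1 : ℝ) else 0))) :=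
  self_consistency_accuracy_tendsto_true_accuracy_general D Y gt μ ystar hmode Ω X hmeas hindep
    hdist a ha
end
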